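/- arXiv:2302.01945 — 6 statements merged into one kernel-verified Lean document; each statement's English description precedes it below -/
import Mathlib

section
/- Let Ω ⊆ ℝ^d be a measurable set, K : ℝ^d × ℝ^d → [0,∞] a symmetric function (K(x,y) = K(y,x)), and f : ℝ^d × ℝ^d → ℝ an antisymmetric function (f(x,y) = -f(y,x)) such that (x,y) ↦ f(x,y) K(x,y) is integrable on ℝ^d × ℝ^d. Then ∫_Ω (2 ∫_{ℝ^d} f(x,y) K(x,y) dy) dx = ∫_{Ωᶜ} (-2 ∫_Ω f(x,y) K(x,y) dy) dx. -/
open MeasureTheory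

lemma swap_setIntegral {α : Type*} [MeasurableSpace α] {μ : Measure α} [SigmaFinite μ]
    (g : α × α → ℝ) (s t : Set α) :
    ∫ p in s ×ˢ t, g p ∂(μ.prod μ) = ∫ p in t ×ˢ s, g p.swap ∂(μ.prod μ) := by
  have h := (Measure.measurePreserving_swap (μ := μ) (ν := μ)).setIntegral_preimage_emb
    MeasurableEquiv.prodComm.measurableEmbedding g (s ×ˢ t)
  rw [← h]
  congr 1
  ext p
  simp [Set.mem_prod, and_comm]

lemma nonlocal_div_aux {α : Type*} [MeasurableSpace α] {μ : Measure α} [SigmaFinite μ]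
    (Ω : Set α) (hΩ : MeasurableSet Ω) (g : α × α → ℝ)
    (hganti : ∀ p : α × α, g p.swap = - g p)
    (hint : Integrable g (μ.prod μ)) :
    ∫ x in Ω, (2 * ∫ y, g (x, y) ∂μ) ∂μ =
      ∫ x in Ωᶜ, (-2 * ∫ y in Ω, g (x, y) ∂μ) ∂μ := by
  have h0 : ∫ p in Ω ×ˢ Ω, g p ∂(μ.prod μ) = 0 := by
    have := swap_setIntegral (μ := μ) g Ω Ω
    simp only [hganti] at this
    rw [integral_neg] at this
    linarith
  have hswap : ∫ p in Ωᶜ ×ˢ Ω, g p ∂(μ.prod μ) = - ∫ p in Ω ×ˢ Ωᶜ, g p ∂(μ.prod μ) := by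
    have := swap_setIntegral (μ := μ) g Ωᶜ Ω
    simp only [hganti] at this
    rw [integral_neg] at this
    linarith
  have hL : ∫ x in Ω, (2 * ∫ y, g (x, y) ∂μ) ∂μ
      = 2 * ∫ p in Ω ×ˢ (Set.univ : Set α), g p ∂(μ.prod μ) := by
    rw [integral_const_mul]
    congr 1
    rw [setIntegral_prod _ hint.integrableOn]
    simp
  have hR : ∫ x in Ωᶜ, (-2 * ∫ y in Ω, g (x, y) ∂μ) ∂μ
      = -2 * ∫ p in Ωᶜ ×ˢ Ω, g p ∂(μ.prod μ) := by
    rw [integral_const_mul]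
    congr 1
    rw [setIntegral_prod _ hint.integrableOn]
  have hunion : ∫ p in Ω ×ˢ (Set.univ : Set α), g p ∂(μ.prod μ)
      = (∫ p in Ω ×ˢ Ω, g p ∂(μ.prod μ)) + ∫ p in Ω ×ˢ Ωᶜ, g p ∂(μ.prod μ) := by
    rw [← setIntegral_union]
    · congr 1
      rw [← Set.prod_union, Set.union_compl_self]
    · rw [Set.disjoint_prod]
      exact Or.inr disjoint_compl_right
    · exact hΩ.prod hΩ.compl
    · exact hint.integrableOn
    · exact hint.integrableOn
  rw [hL, hR, hunion, h0, hswap]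
  ring

/-- Nonlocal divergence theorem. -/
theorem nonlocal_divergence_theorem
    {d : ℕ} (Ω : Set (EuclideanSpace ℝ (Fin d))) (hΩ : MeasurableSet Ω)
    (K : EuclideanSpace ℝ (Fin d) → EuclideanSpace ℝ (Fin d) → ℝ)
    (hKnonneg : ∀ x y, 0 ≤ K x y)
    (hKsymm : ∀ x y, K x y = K y x)
    (f : EuclideanSpace ℝ (Fin d) → EuclideanSpace ℝ (Fin d) → ℝ)
    (hfanti : ∀ x y, f x y = - f y x)
    (hint : Integrable (fun p : EuclideanSpace ℝ (Fin d) × EuclideanSpace ℝ (Fin d) =>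
      f p.1 p.2 * K p.1 p.2)) :
    ∫ x in Ω, (2 * ∫ y, f x y * K x y) =
      ∫ x in Ωᶜ, (-2 * ∫ y in Ω, f x y * K x y) := by
  exact nonlocal_div_aux (μ := (volume : Measure (EuclideanSpace ℝ (Fin d)))) Ω hΩ
    (fun p => f p.1 p.2 * K p.1 p.2)
    (by
      rintro ⟨x, y⟩
      simp only [Prod.swap]
      rw [hfanti y x, hKsymm y x]
      ring)
    hint
end

section
/- Let Ω ⊆ ℝ^d be measurable, μ : ℝ^d → [0,∞) an even measurable function, α : ℝ^d → (0,∞) an even measurable function, f : ℝ^d × ℝ^d → ℝ antisymmetric, and φ : ℝ^d → ℝ a scalar function, with all relevant integrals absolutely convergent. Define the nonlocal divergence D_μ f(x) = 2 ∫_{ℝ^d} f(x,y) μ(y-x) dy and the nonlocal gradient G_α φ(x,y) = α(y-x)(φ(y) - φ(x)). Then ∫_{ℝ^d} D_μ f(x) φ(x) dx = - ∫_{ℝ^d} ∫_{ℝ^d} f(x,y) G_α φ(x,y) α(y-x)^{-1} μ(y-x) dy dx. -/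
open MeasureTheory

/-- Duality of the nonlocal divergence and the nonlocal gradient. -/
theorem nonlocal_divergence_gradient_duality
    {d : ℕ}
    (μ : EuclideanSpace ℝ (Fin d) → ℝ) (hμnonneg : ∀ h, 0 ≤ μ h)
    (hμeven : ∀ h, μ (-h) = μ h) (hμmeas : Measurable μ)
    (α : EuclideanSpace ℝ (Fin d) → ℝ) (hαpos : ∀ h, 0 < α h)
    (hαeven : ∀ h, α (-h) = α h) (hαmeas : Measurable α)
    (f : EuclideanSpace ℝ (Fin d) → EuclideanSpace ℝ (Fin d) → ℝ)
    (hfanti : ∀ x y, f x y = - f y x)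
    (φ : EuclideanSpace ℝ (Fin d) → ℝ)
    (hint1 : Integrable (fun p : EuclideanSpace ℝ (Fin d) × EuclideanSpace ℝ (Fin d) =>
      f p.1 p.2 * μ (p.2 - p.1) * φ p.1))
    (hint2 : Integrable (fun p : EuclideanSpace ℝ (Fin d) × EuclideanSpace ℝ (Fin d) =>
      f p.1 p.2 * μ (p.2 - p.1) * φ p.2)) :
    ∫ x, (2 * ∫ y, f x y * μ (y - x)) * φ x =
      - ∫ x, ∫ y, f x y * (α (y - x) * (φ y - φ x)) * (α (y - x))⁻¹ * μ (y - x) := by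
  have hα : ∀ h, α h ≠ 0 := fun h => (hαpos h).ne'
  have hμ' : ∀ x y : EuclideanSpace ℝ (Fin d), μ (x - y) = μ (y - x) := by
    intro x y; rw [← hμeven, neg_sub]
  have hint1' : Integrable (fun p : EuclideanSpace ℝ (Fin d) × EuclideanSpace ℝ (Fin d) =>
      f p.1 p.2 * μ (p.2 - p.1) * φ p.1)
      ((volume : Measure (EuclideanSpace ℝ (Fin d))).prod volume) := by
    rwa [← Measure.volume_eq_prod]
  have hint2' : Integrable (fun p : EuclideanSpace ℝ (Fin d) × EuclideanSpace ℝ (Fin d) =>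
      f p.1 p.2 * μ (p.2 - p.1) * φ p.2)
      ((volume : Measure (EuclideanSpace ℝ (Fin d))).prod volume) := by
    rwa [← Measure.volume_eq_prod]
  -- swap identity
  have key : (∫ p : EuclideanSpace ℝ (Fin d) × EuclideanSpace ℝ (Fin d),
        f p.1 p.2 * μ (p.2 - p.1) * φ p.2)
      = - ∫ p : EuclideanSpace ℝ (Fin d) × EuclideanSpace ℝ (Fin d),
        f p.1 p.2 * μ (p.2 - p.1) * φ p.1 := by
    rw [Measure.volume_eq_prod, ← integral_prod_swap, ← integral_neg]
    congr 1
    funext p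
    simp only [Prod.fst_swap, Prod.snd_swap]
    rw [hfanti p.2 p.1, hμ']
    ring
  -- LHS
  have hL : ∫ x, (2 * ∫ y, f x y * μ (y - x)) * φ x
      = 2 * ∫ p : EuclideanSpace ℝ (Fin d) × EuclideanSpace ℝ (Fin d),
        f p.1 p.2 * μ (p.2 - p.1) * φ p.1 := by
    rw [Measure.volume_eq_prod, integral_prod _ hint1', ← integral_const_mul]
    congr 1
    funext x
    rw [show (2 * ∫ y, f x y * μ (y - x)) * φ x
        = 2 * ((∫ y, f x y * μ (y - x)) * φ x) by ring,
      ← integral_mul_const]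
  -- RHS inner simplification
  have hR : ∫ x, ∫ y, f x y * (α (y - x) * (φ y - φ x)) * (α (y - x))⁻¹ * μ (y - x)
      = (∫ p : EuclideanSpace ℝ (Fin d) × EuclideanSpace ℝ (Fin d),
          f p.1 p.2 * μ (p.2 - p.1) * φ p.2)
        - ∫ p : EuclideanSpace ℝ (Fin d) × EuclideanSpace ℝ (Fin d),
          f p.1 p.2 * μ (p.2 - p.1) * φ p.1 := by
    rw [← integral_sub hint2 hint1, Measure.volume_eq_prod,
      integral_prod (fun a : EuclideanSpace ℝ (Fin d) × EuclideanSpace ℝ (Fin d) =>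
        f a.1 a.2 * μ (a.2 - a.1) * φ a.2 - f a.1 a.2 * μ (a.2 - a.1) * φ a.1)
        (hint2'.sub hint1')]
    congr 1
    funext x
    congr 1
    funext y
    field_simp [hα (y - x)]
  rw [hL, hR, key]
  ring
end

section
/- Let Ω ⊆ ℝ^d be open and bounded, α, μ : ℝ^d \ {0} → [0,∞) even measurable functions with ∫_{ℝ^d} min{1, |h|²} α(h) μ(h) dh < ∞. Let F : ℝ^d → ℝ^d be a C¹ vector field with compact support, and define the nonlocal vector field f_α(x,y) = α(x-y) ∫₀¹ F(x + t(y-x)) · (y-x) dt for x ≠ y, f_α(x,x) = 0. Then for every x ∈ Ω, the principal value integral pv. ∫_{ℝ^d} f_α(x,y) μ(y-x) dy exists and is finite. -/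
/-!
Translating by `x`, the truncated integral becomes `∫_{ε < ‖h‖} k(h) φ(h) dh` with `k = α μ` even
and `φ(h)` the work of `F` along the segment from `x` to `x + h`. Since `k` and Lebesgue measure
are invariant under `h ↦ -h`, this equals half the truncated integral of `k(h) (φ(h) + φ(-h))`.
The Lipschitz bound on `F` gives `|φ(h) + φ(-h)| ≤ 2 K ‖h‖²`, and the compact support of `F`
bounds `φ` uniformly, so the symmetrized integrand is dominated by a multiple of
`min 1 ‖h‖² · k(h)`; dominated convergence then yields the limit as `ε → 0⁺`.
-/

open MeasureTheory Filter Set Topology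

section PrincipalValue

variable {E V : Type*} [NormedAddCommGroup E] [MeasurableSpace E] [BorelSpace E]
  [NormedAddCommGroup V] [NormedSpace ℝ V] {ν : Measure E}

theorem measurableSet_norm_gt (ε : ℝ) : MeasurableSet {h : E | ε < ‖h‖} :=
  measurableSet_lt measurable_const measurable_norm

theorem tendsto_setIntegral_norm_gt {G : E → V} (hG : Integrable G ν) :
    Tendsto (fun ε : ℝ => ∫ h in {h | ε < ‖h‖}, G h ∂ν) (𝓝[>] 0)
      (𝓝 (∫ h in {h | 0 < ‖h‖}, G h ∂ν)) := by
  simp_rw [← integral_indicator (measurableSet_norm_gt _)]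
  refine tendsto_integral_filter_of_dominated_convergence (fun h => ‖G h‖)
    (Eventually.of_forall fun ε => hG.aestronglyMeasurable.indicator (measurableSet_norm_gt ε))
    (Eventually.of_forall fun ε => Eventually.of_forall fun h => norm_indicator_le_norm_self _ _)
    hG.norm (Eventually.of_forall fun h => tendsto_const_nhds.congr' ?_)
  rcases (norm_nonneg h).eq_or_lt with h0 | hpos
  · filter_upwards [self_mem_nhdsWithin] with ε (hε : 0 < ε)
    simp only [indicator_apply, mem_ofPred_eq, ← h0, lt_irrefl, hε.not_gt, if_false]
  · filter_upwards [nhdsWithin_le_nhds (eventually_lt_nhds hpos)] with ε hε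
    simp only [indicator_apply, mem_ofPred_eq, hpos, hε, if_true]

theorem setIntegral_norm_gt_comp_neg [ν.IsNegInvariant] (g : E → V) (ε : ℝ) :
    ∫ h in {h | ε < ‖h‖}, g (-h) ∂ν = ∫ h in {h | ε < ‖h‖}, g h ∂ν := by
  rw [← integral_indicator (measurableSet_norm_gt ε), ← integral_indicator (measurableSet_norm_gt ε),
    ← integral_neg_eq_self]
  congr 1
  ext h
  simp [indicator_apply]

theorem exists_tendsto_setIntegral_norm_gt [ν.IsNegInvariant] {g : E → V}
    (hg : ∀ ε > 0, IntegrableOn g {h | ε < ‖h‖} ν)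
    (hsymm : Integrable (fun h => g h + g (-h)) ν) :
    ∃ L, Tendsto (fun ε : ℝ => ∫ h in {h | ε < ‖h‖}, g h ∂ν) (𝓝[>] 0) (𝓝 L) := by
  refine ⟨_, ((tendsto_setIntegral_norm_gt hsymm).const_smul (2⁻¹ : ℝ)).congr' ?_⟩
  filter_upwards [self_mem_nhdsWithin] with ε hε
  have hneg : IntegrableOn (fun h => g (-h)) {h | ε < ‖h‖} ν := by
    simpa using (hg ε hε).comp_neg
  rw [integral_add (hg ε hε) hneg, setIntegral_norm_gt_comp_neg, ← two_smul ℝ, smul_smul]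
  norm_num

theorem setIntegral_norm_sub_gt [ν.IsAddLeftInvariant] (f : E → V) (x : E) (ε : ℝ) :
    ∫ y in {y | ε < ‖y - x‖}, f y ∂ν = ∫ h in {h | ε < ‖h‖}, f (x + h) ∂ν := by
  have hmeas : MeasurableSet {y : E | ε < ‖y - x‖} :=
    measurableSet_lt measurable_const (measurable_id.sub_const x).norm
  rw [← integral_indicator hmeas, ← integral_indicator (measurableSet_norm_gt ε),
    ← integral_add_left_eq_self _ x]
  congr 1
  ext h
  simp [indicator_apply]

end PrincipalValue

section LevyKernel

variable {E : Type*} [NormedAddCommGroup E] [MeasurableSpace E] [BorelSpace E] {ν : Measure E}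
  {k ψ : E → ℝ} {B C : ℝ}

theorem integrableOn_norm_gt_of_levy (hk : Integrable (fun h => min 1 (‖h‖ ^ 2) * k h) ν)
    (hk0 : ∀ h, 0 ≤ k h) (hkm : Measurable k) (hψm : Measurable ψ) (hψ : ∀ h, |ψ h| ≤ B)
    {ε : ℝ} (hε : 0 < ε) : IntegrableOn (fun h => k h * ψ h) {h | ε < ‖h‖} ν := by
  set m := min 1 (ε ^ 2)
  have hm : 0 < m := lt_min one_pos (by positivity)
  have hB : 0 ≤ B := (abs_nonneg _).trans (hψ 0)
  refine Integrable.mono' (hk.const_mul (B / m)).integrableOn (hkm.mul hψm).aestronglyMeasurable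
    (ae_restrict_of_forall_mem (measurableSet_norm_gt ε) fun h (hh : ε < ‖h‖) => ?_)
  have hmh : m ≤ min 1 (‖h‖ ^ 2) := min_le_min_left _ (pow_le_pow_left₀ hε.le hh.le 2)
  calc ‖k h * ψ h‖ = k h * |ψ h| := by rw [Real.norm_eq_abs, abs_mul, abs_of_nonneg (hk0 h)]
    _ ≤ B / m * (m * k h) := by
      rw [← mul_assoc, div_mul_cancel₀ _ hm.ne', mul_comm B]
      exact mul_le_mul_of_nonneg_left (hψ h) (hk0 h)
    _ ≤ B / m * (min 1 (‖h‖ ^ 2) * k h) := by gcongr; exact hk0 h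

theorem integrable_mul_add_comp_neg_of_levy
    (hk : Integrable (fun h => min 1 (‖h‖ ^ 2) * k h) ν) (hk0 : ∀ h, 0 ≤ k h)
    (hkeven : ∀ h, k (-h) = k h) (hkm : Measurable k) (hψm : Measurable ψ) (hψ : ∀ h, |ψ h| ≤ B)
    (hψsymm : ∀ h, ‖h‖ ≤ 1 → |ψ h + ψ (-h)| ≤ C * ‖h‖ ^ 2) :
    Integrable (fun h => k h * ψ h + k (-h) * ψ (-h)) ν := by
  have hsymm : ∀ h, |ψ h + ψ (-h)| ≤ max C (2 * B) * min 1 (‖h‖ ^ 2) := by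
    intro h
    rcases le_or_gt ‖h‖ 1 with hh | hh
    · rw [min_eq_right (pow_le_one₀ (norm_nonneg h) hh)]
      exact (hψsymm h hh).trans (by gcongr; exact le_max_left _ _)
    · rw [min_eq_left (one_le_pow₀ hh.le), mul_one]
      calc |ψ h + ψ (-h)| ≤ |ψ h| + |ψ (-h)| := abs_add_le _ _
        _ ≤ 2 * B := by linarith [hψ h, hψ (-h)]
        _ ≤ max C (2 * B) := le_max_right _ _
  refine Integrable.mono' (hk.const_mul (max C (2 * B)))
    ((hkm.mul hψm).add ((hkm.mul hψm).comp measurable_neg)).aestronglyMeasurable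
    (Eventually.of_forall fun h => ?_)
  calc ‖k h * ψ h + k (-h) * ψ (-h)‖ = k h * |ψ h + ψ (-h)| := by
        rw [hkeven, ← mul_add, Real.norm_eq_abs, abs_mul, abs_of_nonneg (hk0 h)]
    _ ≤ k h * (max C (2 * B) * min 1 (‖h‖ ^ 2)) := mul_le_mul_of_nonneg_left (hsymm h) (hk0 h)
    _ = max C (2 * B) * (min 1 (‖h‖ ^ 2) * k h) := by ring

theorem exists_tendsto_setIntegral_norm_gt_of_levy [ν.IsNegInvariant]
    (hk : Integrable (fun h => min 1 (‖h‖ ^ 2) * k h) ν) (hk0 : ∀ h, 0 ≤ k h)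
    (hkeven : ∀ h, k (-h) = k h) (hkm : Measurable k) (hψm : Measurable ψ) (hψ : ∀ h, |ψ h| ≤ B)
    (hψsymm : ∀ h, ‖h‖ ≤ 1 → |ψ h + ψ (-h)| ≤ C * ‖h‖ ^ 2) :
    ∃ L, Tendsto (fun ε : ℝ => ∫ h in {h | ε < ‖h‖}, k h * ψ h ∂ν) (𝓝[>] 0) (𝓝 L) :=
  exists_tendsto_setIntegral_norm_gt
    (fun _ hε => integrableOn_norm_gt_of_levy hk hk0 hkm hψm hψ hε)
    (integrable_mul_add_comp_neg_of_levy hk hk0 hkeven hkm hψm hψ hψsymm)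

end LevyKernel

theorem norm_intervalIntegral_le_of_eq_zero_of_lt {V : Type*} [NormedAddCommGroup V]
    [NormedSpace ℝ V] {f : ℝ → V} {M b c : ℝ} (hb : 0 ≤ b) (hc : 0 ≤ c)
    (hf : IntervalIntegrable f volume 0 b) (hM : ∀ t, ‖f t‖ ≤ M) (hzero : ∀ t, c < t → f t = 0) :
    ‖∫ t in 0..b, f t‖ ≤ M * c := by
  set c' := min b c
  have hc' : 0 ≤ c' := le_min hb hc
  have htail : ∫ t in c'..b, f t = 0 := by
    refine intervalIntegral.integral_zero_ae (Eventually.of_forall fun t ht => hzero t ?_)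
    rw [uIoc_of_le (min_le_left b c), mem_Ioc, min_lt_iff] at ht
    exact ht.1.resolve_left ht.2.not_gt
  have hmem : c' ∈ uIcc 0 b := by
    rw [uIcc_of_le hb]
    exact ⟨hc', min_le_left b c⟩
  rw [← intervalIntegral.integral_add_adjacent_intervals
      (hf.mono_set (uIcc_subset_uIcc left_mem_uIcc hmem))
      (hf.mono_set (uIcc_subset_uIcc hmem right_mem_uIcc)), htail, add_zero]
  calc ‖∫ t in 0..c', f t‖ ≤ M * |c' - 0| :=
        intervalIntegral.norm_integral_le_of_norm_le_const fun t _ => hM t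
    _ ≤ M * c := by
      rw [sub_zero, abs_of_nonneg hc']
      exact mul_le_mul_of_nonneg_left (min_le_right b c) ((norm_nonneg _).trans (hM 0))

section SegmentIntegral

variable {E : Type*} [NormedAddCommGroup E] [InnerProductSpace ℝ E] (F : E → E)

noncomputable def segmentIntegral (x h : E) : ℝ :=
  ∫ t in (0 : ℝ)..1, inner ℝ (F (x + t • h)) h

variable {F}

theorem continuous_segmentIntegral (hF : Continuous F) (x : E) :
    Continuous (segmentIntegral F x) :=
  intervalIntegral.continuous_parametric_intervalIntegral_of_continuous' (by fun_prop) 0 1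

theorem abs_segmentIntegral_le {M R : ℝ} (hR : 0 ≤ R) (hM : ∀ z, ‖F z‖ ≤ M)
    (hsupp : ∀ z, R < ‖z‖ → F z = 0) (hF : Continuous F) (x h : E) :
    |segmentIntegral F x h| ≤ M * (R + ‖x‖) := by
  have hM0 : 0 ≤ M := (norm_nonneg _).trans (hM 0)
  rcases eq_or_ne h 0 with rfl | hh
  · simp [segmentIntegral]
    positivity
  have hpos : 0 < ‖h‖ := norm_pos_iff.2 hh
  have hzero : ∀ t, (R + ‖x‖) / ‖h‖ < t → inner ℝ (F (x + t • h)) h = 0 := by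
    intro t ht
    rw [div_lt_iff₀ hpos] at ht
    have htriangle := norm_sub_le (x + t • h) x
    rw [add_sub_cancel_left, norm_smul, Real.norm_eq_abs] at htriangle
    have hfar : R < ‖x + t • h‖ := by
      nlinarith [le_abs_self t]
    rw [hsupp _ hfar, inner_zero_left]
  have := norm_intervalIntegral_le_of_eq_zero_of_lt zero_le_one (by positivity)
    ((by fun_prop : Continuous fun t : ℝ => inner ℝ (F (x + t • h)) h).intervalIntegrable 0 1)
    (fun t => (norm_inner_le_norm _ _).trans (mul_le_mul_of_nonneg_right (hM _) (norm_nonneg h)))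
    hzero
  rwa [mul_assoc, mul_div_cancel₀ _ hpos.ne', Real.norm_eq_abs] at this

theorem abs_segmentIntegral_add_neg_le {K : NNReal} (hF : LipschitzWith K F) (x h : E) :
    |segmentIntegral F x h + segmentIntegral F x (-h)| ≤ 2 * K * ‖h‖ ^ 2 := by
  have hcont : Continuous F := hF.continuous
  have hsum : segmentIntegral F x h + segmentIntegral F x (-h) =
      ∫ t in (0 : ℝ)..1, inner ℝ (F (x + t • h) - F (x + t • -h)) h := by
    simp only [segmentIntegral, inner_neg_right, intervalIntegral.integral_neg, inner_sub_left]
    rw [intervalIntegral.integral_sub ((by fun_prop : Continuous _).intervalIntegrable 0 1)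
      ((by fun_prop : Continuous _).intervalIntegrable 0 1), sub_eq_add_neg]
  rw [hsum, ← Real.norm_eq_abs]
  refine (intervalIntegral.norm_integral_le_of_norm_le_const (C := 2 * K * ‖h‖ ^ 2)
    fun t ht => ?_).trans_eq (by simp)
  rw [uIoc_of_le zero_le_one] at ht
  have hdiff : (x + t • h) - (x + t • -h) = (2 * t) • h := by
    rw [mul_smul, two_smul, smul_neg]
    abel
  calc ‖inner ℝ (F (x + t • h) - F (x + t • -h)) h‖
      ≤ ‖F (x + t • h) - F (x + t • -h)‖ * ‖h‖ := norm_inner_le_norm _ _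
    _ ≤ K * ((2 * t) * ‖h‖) * ‖h‖ := by
      gcongr
      have := hF.dist_le_mul (x + t • h) (x + t • -h)
      rwa [dist_eq_norm, dist_eq_norm, hdiff, norm_smul, Real.norm_eq_abs,
        abs_of_pos (by linarith [ht.1])] at this
    _ ≤ K * ((2 * 1) * ‖h‖) * ‖h‖ := by gcongr; exact ht.2
    _ = 2 * K * ‖h‖ ^ 2 := by ring

end SegmentIntegral

theorem pv_integral_exists_generated_field_general
    {d : ℕ} (Ω : Set (EuclideanSpace ℝ (Fin d)))
    (α μ : EuclideanSpace ℝ (Fin d) → ℝ)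
    (hαnonneg : ∀ h, 0 ≤ α h) (hμnonneg : ∀ h, 0 ≤ μ h)
    (hαeven : ∀ h, α (-h) = α h) (hμeven : ∀ h, μ (-h) = μ h)
    (hαmeas : Measurable α) (hμmeas : Measurable μ)
    (hlevy : ∫⁻ h, ENNReal.ofReal (min 1 (‖h‖ ^ 2) * α h * μ h) < ⊤)
    (F : EuclideanSpace ℝ (Fin d) → EuclideanSpace ℝ (Fin d))
    (hF : ContDiff ℝ 1 F) (hFsupp : HasCompactSupport F)
    (fα : EuclideanSpace ℝ (Fin d) → EuclideanSpace ℝ (Fin d) → ℝ)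
    (hfα : ∀ x y, x ≠ y →
      fα x y = α (x - y) * ∫ t in (0:ℝ)..1, inner ℝ (F (x + t • (y - x))) (y - x)) :
    ∀ x ∈ Ω, ∃ L : ℝ,
      Tendsto (fun ε : ℝ => ∫ y in {y | ε < ‖y - x‖}, fα x y * μ (y - x))
        (nhdsWithin 0 (Set.Ioi 0)) (nhds L) := by
  intro x _
  obtain ⟨M, hM⟩ := hFsupp.exists_bound_of_continuous hF.continuous
  obtain ⟨K, hK⟩ := hF.lipschitzWith_of_hasCompactSupport hFsupp one_ne_zero
  obtain ⟨R, hR, hRsupp⟩ := hFsupp.isBounded.subset_closedBall_lt 0 0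
  have hFzero : ∀ z, R < ‖z‖ → F z = 0 := fun z hz =>
    image_eq_zero_of_notMem_tsupport fun hz' => hz.not_ge (by simpa using hRsupp hz')
  have hk : Integrable (fun h => min 1 (‖h‖ ^ 2) * (α h * μ h)) := by
    simp_rw [← mul_assoc]
    exact (lintegral_ofReal_ne_top_iff_integrable (by fun_prop)
      (Eventually.of_forall fun h =>
        mul_nonneg (mul_nonneg (by positivity) (hαnonneg h)) (hμnonneg h))).1 hlevy.ne
  obtain ⟨L, hL⟩ := exists_tendsto_setIntegral_norm_gt_of_levy hk
    (fun h => mul_nonneg (hαnonneg h) (hμnonneg h)) (fun h => by rw [hαeven, hμeven])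
    (hαmeas.mul hμmeas) (continuous_segmentIntegral hF.continuous x).measurable
    (abs_segmentIntegral_le hR.le hM hFzero hF.continuous x)
    (fun h _ => abs_segmentIntegral_add_neg_le hK x h)
  refine ⟨L, hL.congr' ?_⟩
  filter_upwards [self_mem_nhdsWithin] with ε (hε : 0 < ε)
  rw [setIntegral_norm_sub_gt]
  refine setIntegral_congr_fun (measurableSet_norm_gt ε) fun h (hh : ε < ‖h‖) => ?_
  have hne : x ≠ x + h := fun hx =>
    (hε.trans hh).ne' (by rw [show h = 0 by simpa using hx, norm_zero])
  rw [hfα x (x + h) hne, add_sub_cancel_left, sub_add_cancel_left, hαeven, segmentIntegral]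
  ring

/-- Existence of the principal value integral of the nonlocal vector field generated
by a `C¹` vector field `F` with compact support. -/
theorem pv_integral_exists_generated_field
    {d : ℕ} (Ω : Set (EuclideanSpace ℝ (Fin d))) (hΩopen : IsOpen Ω)
    (hΩbdd : Bornology.IsBounded Ω)
    (α μ : EuclideanSpace ℝ (Fin d) → ℝ)
    (hαnonneg : ∀ h, 0 ≤ α h) (hμnonneg : ∀ h, 0 ≤ μ h)
    (hαeven : ∀ h, α (-h) = α h) (hμeven : ∀ h, μ (-h) = μ h)
    (hαmeas : Measurable α) (hμmeas : Measurable μ)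
    (hlevy : ∫⁻ h, ENNReal.ofReal (min 1 (‖h‖ ^ 2) * α h * μ h) < ⊤)
    (F : EuclideanSpace ℝ (Fin d) → EuclideanSpace ℝ (Fin d))
    (hF : ContDiff ℝ 1 F) (hFsupp : HasCompactSupport F)
    (fα : EuclideanSpace ℝ (Fin d) → EuclideanSpace ℝ (Fin d) → ℝ)
    (hfα : ∀ x y, x ≠ y →
      fα x y = α (x - y) * ∫ t in (0:ℝ)..1, inner ℝ (F (x + t • (y - x))) (y - x))
    (hfαdiag : ∀ x, fα x x = 0) :
    ∀ x ∈ Ω, ∃ L : ℝ,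
      Tendsto (fun ε : ℝ => ∫ y in {y | ε < ‖y - x‖}, fα x y * μ (y - x))
        (nhdsWithin 0 (Set.Ioi 0)) (nhds L) :=
  pv_integral_exists_generated_field_general Ω α μ hαnonneg hμnonneg hαeven hμeven hαmeas hμmeas
    hlevy F hF hFsupp fα hfα
end

section
/- For ε ∈ (0,1) and t ∈ ℝ, define k_ε(t) = -2d(d+2)/H^{d-1}(S^{d-1}) · ε^{-d-2} · (∫_{B_ε^{-t}} h_d dh) · 1_{(0,ε)}(t), where B_ε^{-t} = {h ∈ B_ε(0) ⊂ ℝ^d : h_d < -t} and h_d denotes the last coordinate of h. Then for every ε ∈ (0,1): k_ε ≥ 0, ∫_ℝ k_ε(t) dt = 1, and for every δ > 0, ∫_{|t| > δ} k_ε(t) dt → 0 as ε → 0⁺. In other words, (k_ε) is an approximate identity at 0. -/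
/-!
The kernel vanishes outside `(0, ε)`, and is nonnegative there because `h_d < -t < 0` on
`B_ε^{-t}`; this support property alone gives the tail condition. For the mass, Fubini turns
`∫₀^ε ∫_{B_ε^{-t}} h_d dh dt` into `-∫_{B_ε} (h_d⁻)² dh`. The symmetry `h ↦ -h` makes this
`-½ ∫_{B_ε} h_d²`, the symmetry among coordinates makes it `-(1/2d) ∫_{B_ε} |h|²`, and polar
coordinates give `∫_{B_ε} |h|² = d |B₁| ε^{d+2} / (d+2)`. Since `H^{d-1}(S^{d-1}) = d |B₁|`,
the prefactor of `k_ε` exactly cancels this.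
-/

open MeasureTheory Filter

/-- Surface measure of the unit sphere `S^{d-1}` in `ℝ^d`. -/
noncomputable def sphereArea (d : ℕ) : ℝ :=
  d * Real.pi ^ ((d : ℝ) / 2) / Real.Gamma ((d : ℝ) / 2 + 1)

/-- The kernel `k_ε` of the approximate identity. Here `d = n + 1`. -/
noncomputable def kFun (n : ℕ) (ε t : ℝ) : ℝ :=
  -2 * (n + 1 : ℝ) * ((n + 1 : ℝ) + 2) / sphereArea (n + 1) * ε ^ (-(n + 1 : ℝ) - 2) *
    (∫ h in {h : EuclideanSpace ℝ (Fin (n + 1)) | ‖h‖ < ε ∧ h (Fin.last n) < -t},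
      h (Fin.last n)) * Set.indicator (Set.Ioo 0 ε) (fun _ => (1 : ℝ)) t

open Set Metric Module
open scoped Pointwise

theorem integral_Ioo_setIntegral_lt_neg_eq {α : Type*} [MeasurableSpace α] {μ : Measure α}
    [SFinite μ] {s : Set α} (hs : MeasurableSet s) (hμs : μ s ≠ ⊤) {f : α → ℝ}
    (hf : Measurable f) {ε : ℝ} (hfε : ∀ x ∈ s, -ε ≤ f x) :
    ∫ t in Ioo 0 ε, ∫ x in s ∩ {x | f x < -t}, f x ∂μ = -∫ x in s, max (-f x) 0 ^ 2 ∂μ := by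
  have : IsFiniteMeasure (μ.restrict s) := isFiniteMeasure_restrict.2 hμs
  let G : ℝ → α → ℝ := fun t => {x | f x < -t}.indicator f
  have hG : Integrable (Function.uncurry G) ((volume.restrict (Ioo 0 ε)).prod (μ.restrict s)) := by
    have hsupp : ∀ᵐ p ∂(volume.restrict (Ioo 0 ε)).prod (μ.restrict s), p.1 ∈ Ioo 0 ε ∧ p.2 ∈ s :=
      (Measure.quasiMeasurePreserving_fst.ae (ae_restrict_mem measurableSet_Ioo)).and
        (Measure.quasiMeasurePreserving_snd.ae (ae_restrict_mem hs))
    refine Integrable.of_bound ?_ ε (hsupp.mono fun p ⟨ht, hx⟩ => ?_)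
    · exact ((hf.comp measurable_snd).indicator
        (measurableSet_lt (hf.comp measurable_snd) measurable_fst.neg)).aestronglyMeasurable
    · by_cases h : f p.2 < -p.1
      · rw [show Function.uncurry G p = f p.2 from indicator_of_mem (s := {x | f x < -p.1}) h f,
          Real.norm_eq_abs, abs_le]
        constructor <;> linarith [hfε _ hx, ht.1]
      · rw [show Function.uncurry G p = 0 from indicator_of_notMem (s := {x | f x < -p.1}) h f,
          norm_zero]
        linarith [ht.1, ht.2]
  -- for `x ∈ s` the `t`-integral runs over `(0, -f x)`, as `-f x ≤ ε`
  have hinner : ∀ x ∈ s, ∫ t in Ioo 0 ε, G t x = -(max (-f x) 0 ^ 2) := by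
    intro x hx
    have hG_eq : ∀ t, G t x = (Iio (-f x)).indicator (fun _ => f x) t := fun t => by
      simp only [G, indicator, mem_ofPred_eq, mem_Iio, lt_neg]
    simp_rw [hG_eq]
    rw [setIntegral_indicator measurableSet_Iio, Ioo_inter_Iio, setIntegral_const,
      Real.volume_real_Ioo, min_eq_right (by linarith [hfε x hx]), sub_zero, smul_eq_mul]
    rcases le_total (f x) 0 with h | h <;> simp [h]
    ring
  calc ∫ t in Ioo 0 ε, ∫ x in s ∩ {x | f x < -t}, f x ∂μ
      = ∫ t in Ioo 0 ε, ∫ x in s, G t x ∂μ := by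
        simp only [G, setIntegral_indicator (measurableSet_lt hf measurable_const)]
    _ = ∫ x in s, (∫ t in Ioo 0 ε, G t x) ∂μ := integral_integral_swap hG
    _ = ∫ x in s, -(max (-f x) 0 ^ 2) ∂μ := setIntegral_congr_fun hs hinner
    _ = -∫ x in s, max (-f x) 0 ^ 2 ∂μ := integral_neg _

theorem setIntegral_comp_neg_of_neg_eq {G : Type*} [MeasurableSpace G] [AddGroup G]
    [MeasurableNeg G] (μ : Measure G) [μ.IsNegInvariant] {s : Set G} (hs : MeasurableSet s)
    (hneg : -s = s) (f : G → ℝ) : ∫ x in s, f (-x) ∂μ = ∫ x in s, f x ∂μ := by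
  rw [← integral_indicator hs, ← integral_indicator hs, ← integral_neg_eq_self (s.indicator f)]
  congr 1 with x
  have hx : -x ∈ s ↔ x ∈ s := by rw [← Set.mem_neg, hneg]
  by_cases h : x ∈ s <;> simp [h, hx]

section HaarBall

variable {E : Type*} [NormedAddCommGroup E] [NormedSpace ℝ E] [FiniteDimensional ℝ E]
  [MeasurableSpace E] [BorelSpace E] (μ : Measure E) [μ.IsAddHaarMeasure]

theorem setIntegral_ball_norm_sq [Nontrivial E] {r : ℝ} (hr : 0 ≤ r) :
    ∫ x in ball 0 r, ‖x‖ ^ 2 ∂μ =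
      finrank ℝ E * μ.real (ball 0 1) * r ^ (finrank ℝ E + 2) / (finrank ℝ E + 2) := by
  have hpow : ∀ y : ℝ, y ^ (finrank ℝ E - 1) • (Iio r).indicator (· ^ 2) y =
      (Iio r).indicator (· ^ (finrank ℝ E + 1)) y := by
    intro y
    by_cases hy : y < r
    · simp only [smul_eq_mul, indicator_of_mem (mem_Iio.2 hy), ← pow_add]
      have := finrank_pos (R := ℝ) (M := E)
      congr 1
      omega
    · simp [hy]
  calc ∫ x in ball 0 r, ‖x‖ ^ 2 ∂μ = ∫ x, (Iio r).indicator (· ^ 2) ‖x‖ ∂μ := by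
        rw [← integral_indicator measurableSet_ball, ball_zero_eq]
        rfl
    _ = finrank ℝ E * μ.real (ball 0 1) * ∫ y in Ioo 0 r, y ^ (finrank ℝ E + 1) := by
        rw [integral_fun_norm_addHaar, nsmul_eq_mul, smul_eq_mul, ← mul_assoc]
        simp_rw [hpow]
        rw [setIntegral_indicator measurableSet_Iio, Ioi_inter_Iio]
    _ = _ := by
        rw [← integral_Ioc_eq_integral_Ioo, ← intervalIntegral.integral_of_le hr, integral_pow]
        push_cast
        ring

theorem setIntegral_ball_sq_max_neg {f : E → ℝ} (hf : Continuous f) (hodd : ∀ x, f (-x) = -f x)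
    (r : ℝ) : ∫ x in ball 0 r, max (-f x) 0 ^ 2 ∂μ = (∫ x in ball 0 r, f x ^ 2 ∂μ) / 2 := by
  have hint : ∀ {g : E → ℝ}, Continuous g → IntegrableOn g (ball 0 r) μ := fun hg =>
    (hg.continuousOn.integrableOn_compact (isCompact_closedBall 0 r)).mono_set
      ball_subset_closedBall
  have hsymm : ∫ x in ball 0 r, max (f x) 0 ^ 2 ∂μ = ∫ x in ball 0 r, max (-f x) 0 ^ 2 ∂μ := by
    simpa [hodd] using setIntegral_comp_neg_of_neg_eq μ measurableSet_ball
      (by rw [neg_ball, neg_zero]) (fun x => max (-f x) 0 ^ 2)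
  have hsum : ∀ a : ℝ, max (-a) 0 ^ 2 + max a 0 ^ 2 = a ^ 2 := by
    intro a
    rcases le_total a 0 with ha | ha <;> simp [ha]
  calc ∫ x in ball 0 r, max (-f x) 0 ^ 2 ∂μ
      = ((∫ x in ball 0 r, max (-f x) 0 ^ 2 ∂μ) + ∫ x in ball 0 r, max (f x) 0 ^ 2 ∂μ) / 2 := by
        rw [hsymm]; ring
    _ = (∫ x in ball 0 r, (max (-f x) 0 ^ 2 + max (f x) 0 ^ 2) ∂μ) / 2 := by
        rw [integral_add (hint (by fun_prop)) (hint (by fun_prop))]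
    _ = (∫ x in ball 0 r, f x ^ 2 ∂μ) / 2 := by simp only [hsum]

end HaarBall

namespace EuclideanSpace

variable {ι : Type*} [Fintype ι]

theorem setIntegral_ball_sq_apply_eq (i j : ι) (r : ℝ) :
    ∫ x in ball (0 : EuclideanSpace ℝ ι) r, x i ^ 2 =
      ∫ x in ball (0 : EuclideanSpace ℝ ι) r, x j ^ 2 := by
  classical
  let e := LinearIsometryEquiv.piLpCongrLeft 2 ℝ ℝ (Equiv.swap i j)
  have he : ∀ x : EuclideanSpace ℝ ι, e x i = x j := fun x => by
    simp [e, LinearIsometryEquiv.piLpCongrLeft_apply, Equiv.swap_apply_left]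
  rw [← e.measurePreserving.setIntegral_preimage_emb e.toHomeomorph.measurableEmbedding,
    e.preimage_ball, map_zero]
  simp only [he]

theorem setIntegral_ball_norm_sq_eq_card_mul (i : ι) (r : ℝ) :
    ∫ x in ball (0 : EuclideanSpace ℝ ι) r, ‖x‖ ^ 2 =
      Fintype.card ι * ∫ x in ball (0 : EuclideanSpace ℝ ι) r, x i ^ 2 := by
  have hint : ∀ j, IntegrableOn (fun x : EuclideanSpace ℝ ι => x j ^ 2) (ball 0 r) :=
    fun j => ((((proj j).continuous.pow 2).continuousOn).integrableOn_compact
      (isCompact_closedBall 0 r)).mono_set ball_subset_closedBall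
  simp_rw [norm_sq_eq, Real.norm_eq_abs, sq_abs]
  rw [integral_finsetSum _ fun j _ => hint j]
  simp [setIntegral_ball_sq_apply_eq _ i]

theorem setIntegral_ball_sq_apply (i : ι) {r : ℝ} (hr : 0 ≤ r) :
    ∫ x in ball (0 : EuclideanSpace ℝ ι) r, x i ^ 2 =
      volume.real (ball (0 : EuclideanSpace ℝ ι) 1) * r ^ (Fintype.card ι + 2) /
        (Fintype.card ι + 2) := by
  have : Nonempty ι := ⟨i⟩
  have hcard : (Fintype.card ι : ℝ) ≠ 0 := by exact_mod_cast Fintype.card_ne_zero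
  have h := setIntegral_ball_norm_sq_eq_card_mul i r
  rw [setIntegral_ball_norm_sq volume hr, finrank_euclideanSpace] at h
  apply mul_left_cancel₀ hcard
  rw [← h]
  ring

end EuclideanSpace

theorem sphereArea_eq_mul_volume_ball (d : ℕ) :
    sphereArea d = d * volume.real (ball (0 : EuclideanSpace ℝ (Fin d)) 1) := by
  rcases Nat.eq_zero_or_pos d with rfl | hd
  · simp [sphereArea]
  have : Nonempty (Fin d) := ⟨⟨0, hd⟩⟩
  have hpi : Real.pi ^ ((d : ℝ) / 2) = √Real.pi ^ d := by
    rw [Real.sqrt_eq_rpow, ← Real.rpow_natCast, ← Real.rpow_mul Real.pi_pos.le]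
    ring_nf
  rw [measureReal_def, EuclideanSpace.volume_ball, Fintype.card_fin, ENNReal.ofReal_one, one_pow,
    one_mul, ENNReal.toReal_ofReal (by positivity), sphereArea, hpi]
  ring

section Kernel

variable {n : ℕ} {ε : ℝ}

theorem kFun_eq_zero_of_notMem {t : ℝ} (ht : t ∉ Ioo 0 ε) : kFun n ε t = 0 := by
  simp [kFun, ht]

theorem kFun_nonneg (t : ℝ) : 0 ≤ kFun n ε t := by
  by_cases ht : t ∈ Ioo 0 ε
  · have hconst : -2 * (n + 1 : ℝ) * ((n + 1 : ℝ) + 2) / sphereArea (n + 1) *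
        ε ^ (-(n + 1 : ℝ) - 2) ≤ 0 := by
      rw [sphereArea_eq_mul_volume_ball]
      have hpow := Real.rpow_pos_of_pos (ht.1.trans ht.2) (-(n + 1 : ℝ) - 2)
      refine mul_nonpos_of_nonpos_of_nonneg (div_nonpos_of_nonpos_of_nonneg ?_ (by positivity))
        hpow.le
      nlinarith [n.cast_nonneg (α := ℝ)]
    have hint : ∫ h in {h : EuclideanSpace ℝ (Fin (n + 1)) | ‖h‖ < ε ∧ h (Fin.last n) < -t},
        h (Fin.last n) ≤ 0 :=
      setIntegral_nonpos (by measurability) fun h hh => by linarith [hh.2, ht.1]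
    rw [kFun, indicator_of_mem ht, mul_one]
    exact mul_nonneg_of_nonpos_of_nonpos hconst hint
  · rw [kFun_eq_zero_of_notMem ht]

theorem integral_Ioo_setIntegral_last_lt_neg (hε : 0 < ε) :
    ∫ t in Ioo 0 ε,
      ∫ h in {h : EuclideanSpace ℝ (Fin (n + 1)) | ‖h‖ < ε ∧ h (Fin.last n) < -t},
        h (Fin.last n) =
      -(volume.real (ball (0 : EuclideanSpace ℝ (Fin (n + 1))) 1) * ε ^ (n + 3) / (n + 3)) / 2 := by
  have hlast : ∀ h ∈ ball (0 : EuclideanSpace ℝ (Fin (n + 1))) ε, -ε ≤ h (Fin.last n) :=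
    fun h hh => (abs_le.1 ((PiLp.norm_apply_le h (Fin.last n)).trans (mem_ball_zero_iff.1 hh).le)).1
  simp_rw [ofPred_and, ← ball_zero_eq]
  have hcont : Continuous fun h : EuclideanSpace ℝ (Fin (n + 1)) => h (Fin.last n) := by fun_prop
  rw [integral_Ioo_setIntegral_lt_neg_eq measurableSet_ball measure_ball_lt_top.ne
      hcont.measurable hlast,
    setIntegral_ball_sq_max_neg volume hcont (fun h => by simp) ε,
    EuclideanSpace.setIntegral_ball_sq_apply _ hε.le, Fintype.card_fin]
  push_cast
  ring

theorem integral_kFun (hε : 0 < ε) : ∫ t, kFun n ε t = 1 := by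
  have hkFun : ∀ t, kFun n ε t = (Ioo 0 ε).indicator (fun t => -2 * (n + 1 : ℝ) *
      ((n + 1 : ℝ) + 2) / sphereArea (n + 1) * ε ^ (-(n + 1 : ℝ) - 2) *
      ∫ h in {h : EuclideanSpace ℝ (Fin (n + 1)) | ‖h‖ < ε ∧ h (Fin.last n) < -t},
        h (Fin.last n)) t := fun t => by
    by_cases ht : t ∈ Ioo 0 ε <;> simp [kFun, ht]
  have hεpow : ε ^ (-(n + 1 : ℝ) - 2) = (ε ^ (n + 3))⁻¹ := by
    rw [← Real.rpow_natCast, ← Real.rpow_neg hε.le]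
    push_cast
    ring_nf
  have hball : 0 < volume.real (ball (0 : EuclideanSpace ℝ (Fin (n + 1))) 1) :=
    ENNReal.toReal_pos (measure_ball_pos _ _ one_pos).ne' measure_ball_lt_top.ne
  simp_rw [hkFun]
  rw [integral_indicator measurableSet_Ioo, integral_const_mul,
    integral_Ioo_setIntegral_last_lt_neg hε, sphereArea_eq_mul_volume_ball, hεpow]
  field_simp
  push_cast
  ring

theorem setIntegral_kFun_eq_zero_of_le {δ : ℝ} (hεδ : ε ≤ δ) :
    ∫ t in {t : ℝ | δ < |t|}, kFun n ε t = 0 :=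
  setIntegral_eq_zero_of_forall_eq_zero fun t ht => kFun_eq_zero_of_notMem fun ht' => by
    linarith [ht'.2, abs_of_pos ht'.1, show δ < |t| from ht]

end Kernel

/-- `(k_ε)` is an approximate identity at `0`. -/
theorem kFun_approximate_identity (n : ℕ) :
    (∀ ε ∈ Set.Ioo (0 : ℝ) 1, (∀ t : ℝ, 0 ≤ kFun n ε t) ∧ (∫ t : ℝ, kFun n ε t) = 1) ∧
    (∀ δ > (0 : ℝ), Tendsto (fun ε : ℝ => ∫ t in {t : ℝ | δ < |t|}, kFun n ε t)
      (nhdsWithin 0 (Set.Ioi 0)) (nhds 0)) := by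
  refine ⟨fun ε hε => ⟨kFun_nonneg, integral_kFun hε.1⟩, fun δ hδ => ?_⟩
  refine tendsto_const_nhds.congr' ?_
  filter_upwards [Ioc_mem_nhdsGT hδ] with ε hε
  exact (setIntegral_kFun_eq_zero_of_le hε.2).symm
end

section
/- Let E ⊆ ℝ^d be open and bounded, s ∈ (0,1), and f : ℝ^d × ℝ^d → ℝ antisymmetric with |f| ≤ 1 such that the relevant integrals converge. Then c_{d,s} ∫_E div^{(s)} f(x) dx ≤ (1-s) Per_s(E), where div^{(s)} f(x) = 2 ∫_{ℝ^d} f(x,y) (2ds(1-s)/H^{d-1}(S^{d-1})) |y-x|^{-d-s} dy, c_{d,s} = H^{d-1}(S^{d-1})/(4ds|B^{d-1}|), and Per_s(E) = (1/|B^{d-1}|) ∫_E ∫_{E^c} |y-x|^{-d-s} dy dx. -/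
open MeasureTheory

/-- Volume of the unit ball in `ℝ^{d-1}`. -/
noncomputable def ballVol (m : ℕ) : ℝ :=
  (volume (Metric.ball (0 : EuclideanSpace ℝ (Fin m)) 1)).toReal

/-- The easy inequality `c_{d,s} ∫_E div^{(s)} f ≤ (1-s) Per_s(E)`. -/
theorem fractional_divergence_le_perimeter
    {d : ℕ} (hd : 0 < d) (E : Set (EuclideanSpace ℝ (Fin d)))
    (hEopen : IsOpen E) (hEbdd : Bornology.IsBounded E)
    (s : ℝ) (hs : s ∈ Set.Ioo (0:ℝ) 1)
    (f : EuclideanSpace ℝ (Fin d) → EuclideanSpace ℝ (Fin d) → ℝ)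
    (hfanti : ∀ x y, f x y = - f y x)
    (hfbdd : ∀ x y, |f x y| ≤ 1)
    (hfmeas : Measurable (fun p : EuclideanSpace ℝ (Fin d) × EuclideanSpace ℝ (Fin d) =>
      f p.1 p.2))
    (hint : IntegrableOn
      (fun p : EuclideanSpace ℝ (Fin d) × EuclideanSpace ℝ (Fin d) =>
        f p.1 p.2 * ‖p.2 - p.1‖ ^ (-(d : ℝ) - s)) (E ×ˢ Set.univ))
    (hper : IntegrableOn
      (fun p : EuclideanSpace ℝ (Fin d) × EuclideanSpace ℝ (Fin d) =>
        ‖p.2 - p.1‖ ^ (-(d : ℝ) - s)) (E ×ˢ Eᶜ)) :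
    sphereArea d / (4 * d * s * ballVol (d - 1)) *
        ∫ x in E, (2 * ∫ y, f x y *
          (2 * d * s * (1 - s) / sphereArea d * ‖y - x‖ ^ (-(d : ℝ) - s))) ≤
      (1 - s) * ((1 / ballVol (d - 1)) *
        ∫ x in E, ∫ y in Eᶜ, ‖y - x‖ ^ (-(d : ℝ) - s)) := by
  obtain ⟨hs0, hs1⟩ := hs
  have hd' : (0:ℝ) < d := Nat.cast_pos.mpr hd
  have hA : 0 < sphereArea d := by
    unfold sphereArea
    apply div_pos (by positivity)
    exact Real.Gamma_pos_of_pos (by positivity)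
  have hB : 0 < ballVol (d - 1) := by
    unfold ballVol
    exact ENNReal.toReal_pos (Metric.measure_ball_pos volume 0 one_pos).ne'
      measure_ball_lt_top.ne
  set g : EuclideanSpace ℝ (Fin d) × EuclideanSpace ℝ (Fin d) → ℝ :=
    fun p => f p.1 p.2 * ‖p.2 - p.1‖ ^ (-(d:ℝ) - s) with hg
  have hEmeas : MeasurableSet E := hEopen.measurableSet
  have hEE_int : IntegrableOn g (E ×ˢ E) :=
    hint.mono_set (Set.prod_mono_right (Set.subset_univ E))
  have hEEc_int : IntegrableOn g (E ×ˢ Eᶜ) :=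
    hint.mono_set (Set.prod_mono_right (Set.subset_univ Eᶜ))
  -- the integral over E × E vanishes by antisymmetry
  have hzero : ∫ p in E ×ˢ E, g p = 0 := by
    have hmeq : ((volume : Measure (EuclideanSpace ℝ (Fin d))).restrict E).prod
          ((volume : Measure (EuclideanSpace ℝ (Fin d))).restrict E)
        = (volume : Measure (EuclideanSpace ℝ (Fin d) × EuclideanSpace ℝ (Fin d))).restrict
            (E ×ˢ E) := by
      rw [Measure.prod_restrict, ← Measure.volume_eq_prod]
    have hswap : ∫ p, g (Prod.swap p)
          ∂(((volume : Measure (EuclideanSpace ℝ (Fin d))).restrict E).prod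
            ((volume : Measure (EuclideanSpace ℝ (Fin d))).restrict E))
        = ∫ p, g p
          ∂(((volume : Measure (EuclideanSpace ℝ (Fin d))).restrict E).prod
            ((volume : Measure (EuclideanSpace ℝ (Fin d))).restrict E)) :=
      Measure.measurePreserving_swap.integral_comp
        MeasurableEquiv.prodComm.measurableEmbedding g
    have hneg : ∀ p : EuclideanSpace ℝ (Fin d) × EuclideanSpace ℝ (Fin d),
        g (Prod.swap p) = - g p := by
      intro p
      simp only [hg, Prod.fst_swap, Prod.snd_swap]
      rw [hfanti p.2 p.1, norm_sub_rev p.1 p.2]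
      ring
    simp_rw [hneg, integral_neg] at hswap
    rw [hmeq] at hswap
    linarith
  -- split the integral over E × univ
  have hdisj : Disjoint (E ×ˢ E) (E ×ˢ Eᶜ) := by
    rw [Set.disjoint_left]
    rintro p ⟨-, h1⟩ ⟨-, h2⟩
    exact h2 h1
  have hsplit : ∫ p in E ×ˢ (Set.univ : Set (EuclideanSpace ℝ (Fin d))), g p
      = (∫ p in E ×ˢ E, g p) + ∫ p in E ×ˢ Eᶜ, g p := by
    rw [← setIntegral_union hdisj (hEmeas.prod hEmeas.compl) hEE_int hEEc_int, ← Set.prod_union,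
      Set.union_compl_self]
  -- iterated integral identities
  have hiter1 : ∫ x in E, ∫ y, g (x, y)
      = ∫ p in E ×ˢ (Set.univ : Set (EuclideanSpace ℝ (Fin d))), g p := by
    rw [Measure.volume_eq_prod, setIntegral_prod g (by rwa [← Measure.volume_eq_prod]),
      Measure.restrict_univ]
  have hiter2 : ∫ x in E, ∫ y in Eᶜ, ‖y - x‖ ^ (-(d:ℝ) - s)
      = ∫ p in E ×ˢ Eᶜ,
          (fun p : EuclideanSpace ℝ (Fin d) × EuclideanSpace ℝ (Fin d) =>
            ‖p.2 - p.1‖ ^ (-(d:ℝ) - s)) p := by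
    rw [Measure.volume_eq_prod,
      setIntegral_prod (fun p : EuclideanSpace ℝ (Fin d) × EuclideanSpace ℝ (Fin d) =>
        ‖p.2 - p.1‖ ^ (-(d:ℝ) - s)) (by rwa [← Measure.volume_eq_prod])]
  -- pointwise bound on E × Eᶜ
  have hle : ∫ p in E ×ˢ Eᶜ, g p
      ≤ ∫ p in E ×ˢ Eᶜ,
          (fun p : EuclideanSpace ℝ (Fin d) × EuclideanSpace ℝ (Fin d) =>
            ‖p.2 - p.1‖ ^ (-(d:ℝ) - s)) p := by
    apply setIntegral_mono_on hEEc_int hper (hEmeas.prod hEmeas.compl)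
    intro p _
    have hk : (0:ℝ) ≤ ‖p.2 - p.1‖ ^ (-(d:ℝ) - s) := Real.rpow_nonneg (norm_nonneg _) _
    calc g p ≤ 1 * ‖p.2 - p.1‖ ^ (-(d:ℝ) - s) :=
          mul_le_mul_of_nonneg_right (abs_le.mp (hfbdd p.1 p.2)).2 hk
      _ = _ := one_mul _
  have hT : ∫ x in E, ∫ y, g (x, y) ≤ ∫ x in E, ∫ y in Eᶜ, ‖y - x‖ ^ (-(d:ℝ) - s) := by
    rw [hiter1, hsplit, hzero, zero_add, hiter2]
    exact hle
  -- rewrite the LHS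
  have h1 : ∀ x : EuclideanSpace ℝ (Fin d), (2 : ℝ) * ∫ y, f x y *
        (2 * d * s * (1 - s) / sphereArea d * ‖y - x‖ ^ (-(d:ℝ) - s))
      = (4 * d * s * (1 - s) / sphereArea d) * ∫ y, g (x, y) := by
    intro x
    rw [show (fun y : EuclideanSpace ℝ (Fin d) =>
          f x y * (2 * d * s * (1 - s) / sphereArea d * ‖y - x‖ ^ (-(d:ℝ) - s)))
        = fun y : EuclideanSpace ℝ (Fin d) =>
            (2 * d * s * (1 - s) / sphereArea d) * g (x, y) from
      funext fun y => by simp only [hg]; ring]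
    rw [integral_const_mul]
    ring
  simp_rw [h1]
  rw [integral_const_mul, ← mul_assoc]
  have hconst : sphereArea d / (4 * d * s * ballVol (d - 1))
      * (4 * d * s * (1 - s) / sphereArea d) = (1 - s) / ballVol (d - 1) := by
    field_simp
  rw [hconst]
  calc (1 - s) / ballVol (d - 1) * ∫ x in E, ∫ y, g (x, y)
      ≤ (1 - s) / ballVol (d - 1) * ∫ x in E, ∫ y in Eᶜ, ‖y - x‖ ^ (-(d:ℝ) - s) :=
        mul_le_mul_of_nonneg_left hT (div_nonneg (by linarith) hB.le)
    _ = (1 - s) * ((1 / ballVol (d - 1)) * ∫ x in E, ∫ y in Eᶜ, ‖y - x‖ ^ (-(d:ℝ) - s)) := by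
        ring
end

section
/- Let d ≥ 2 and let γ : ℝ^{d-1} → ℝ be C¹. Fix x' ∈ ℝ^{d-1} and for x_d > γ(x') let z_x ∈ Γ_γ = {(w', γ(w')) : w' ∈ ℝ^{d-1}} be a point minimizing the distance from x = (x', x_d) to Γ_γ. Then |x_d - γ(x')| / |x - z_x| → √(1 + |∇γ(x')|²) as x_d → γ(x')⁺ (for any choice of minimizers z_x). -/
/-!
Put `h = t - γ x'` and `g = Dγ(x')`. Up to an error `o(‖w - x'‖)` the graph of `γ` is the
hyperplane `s = γ x' + g (w - x')`, whose distance from `(x', t)` is `h / √(1 + ‖g‖²)`.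
Comparing with the graph point over `x'`, a minimizer lies over the ball of radius `h` about `x'`,
so the error is `o(h)`. The lower bound is Cauchy–Schwarz,
`h ≤ ‖g‖ a + (h - g (w - x')) ≤ √(1 + ‖g‖²) · √(a² + (g (w - x') - h)²)` with `a = ‖w - x'‖`;
the upper bound tests the foot of the perpendicular to the hyperplane.
-/

open Filter Topology

theorem Real.sqrt_sq_add_sq_le_add_abs_sub (a s s' : ℝ) :
    √(a ^ 2 + s ^ 2) ≤ √(a ^ 2 + s' ^ 2) + |s - s'| := by
  have hs' : |s'| ≤ √(a ^ 2 + s' ^ 2) := Real.abs_le_sqrt (by nlinarith)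
  have hcross : s' * (s - s') ≤ |s'| * |s - s'| := by
    rw [← abs_mul]; exact le_abs_self _
  rw [Real.sqrt_le_left (by positivity)]
  nlinarith [Real.sq_sqrt (by positivity : 0 ≤ a ^ 2 + s' ^ 2), sq_abs (s - s'),
    mul_le_mul_of_nonneg_right hs' (abs_nonneg (s - s'))]

theorem le_sqrt_one_add_sq_mul_sqrt {a c h G : ℝ} (hc : |c| ≤ G * a) :
    h ≤ √(1 + G ^ 2) * √(a ^ 2 + (c - h) ^ 2) := by
  rw [← Real.sqrt_mul (by positivity)]
  calc h ≤ |G * a + (h - c)| := by linarith [le_abs_self (G * a + (h - c)), le_abs_self c]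
    _ ≤ _ := Real.abs_le_sqrt (by nlinarith [sq_nonneg (a - G * (h - c))])

variable {E : Type*} [NormedAddCommGroup E]

/-- The Euclidean distance in `E × ℝ` from `(x, t)` to the point `(w, γ w)` of the graph of `γ`. -/
noncomputable def graphDist (γ : E → ℝ) (x : E) (t : ℝ) (w : E) : ℝ :=
  √(‖w - x‖ ^ 2 + (γ w - t) ^ 2)

variable {γ : E → ℝ} {x : E} {t e : ℝ}

theorem norm_sub_le_graphDist (w : E) : ‖w - x‖ ≤ graphDist γ x t w :=
  Real.le_sqrt_of_sq_le (le_add_of_nonneg_right (sq_nonneg _))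

theorem graphDist_self (γ : E → ℝ) (x : E) (t : ℝ) : graphDist γ x t x = |t - γ x| := by
  rw [graphDist, sub_self, norm_zero, ← abs_sub_comm, ← Real.sqrt_sq_eq_abs]
  norm_num

section NormedSpace

variable [NormedSpace ℝ E] {g : E →L[ℝ] ℝ}

theorem sub_le_graphDist (he : 0 ≤ e) {w : E} (hw : ‖w - x‖ ≤ t - γ x)
    (hrem : |γ w - γ x - g (w - x)| ≤ e * ‖w - x‖) :
    (t - γ x) / √(1 + ‖g‖ ^ 2) - e * (t - γ x) ≤ graphDist γ x t w := by
  have hc : |g (w - x)| ≤ ‖g‖ * ‖w - x‖ := by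
    simpa only [Real.norm_eq_abs] using g.le_opNorm (w - x)
  have hlin : (t - γ x) / √(1 + ‖g‖ ^ 2) ≤ √(‖w - x‖ ^ 2 + (g (w - x) - (t - γ x)) ^ 2) := by
    rw [div_le_iff₀' (by positivity)]
    exact le_sqrt_one_add_sq_mul_sqrt hc
  have htri := Real.sqrt_sq_add_sq_le_add_abs_sub ‖w - x‖ (g (w - x) - (t - γ x)) (γ w - t)
  have hθ : |g (w - x) - (t - γ x) - (γ w - t)| ≤ e * (t - γ x) := by
    rw [abs_sub_comm]
    calc |γ w - t - (g (w - x) - (t - γ x))| = |γ w - γ x - g (w - x)| := by congr 1; ring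
      _ ≤ e * (t - γ x) := hrem.trans (mul_le_mul_of_nonneg_left hw he)
  rw [graphDist]
  linarith

end NormedSpace

section InnerProductSpace

variable [InnerProductSpace ℝ E] [CompleteSpace E] {g : E →L[ℝ] ℝ}

theorem exists_graphDist_le (he : 0 ≤ e) (hh : 0 ≤ t - γ x)
    (hrem : ∀ w, ‖w - x‖ ≤ t - γ x → |γ w - γ x - g (w - x)| ≤ e * ‖w - x‖) :
    ∃ w, graphDist γ x t w ≤ (t - γ x) / √(1 + ‖g‖ ^ 2) + e * (t - γ x) := by
  -- `x + u • v` lies under the foot of the perpendicular from `(x, t)` to the tangent hyperplane.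
  set v := (InnerProductSpace.toDual ℝ E).symm g
  set u := (t - γ x) / (1 + ‖g‖ ^ 2)
  have hv : ‖v‖ = ‖g‖ := (InnerProductSpace.toDual ℝ E).symm.norm_map g
  have hgv : g v = ‖g‖ ^ 2 := by
    rw [← InnerProductSpace.toDual_symm_apply, real_inner_self_eq_norm_sq, hv]
  have hu : 0 ≤ u := by positivity
  have hu_mul : u * (1 + ‖g‖ ^ 2) = t - γ x := div_mul_cancel₀ _ (by positivity)
  have hnorm : ‖(x + u • v) - x‖ = u * ‖g‖ := by
    rw [add_sub_cancel_left, norm_smul, Real.norm_of_nonneg hu, hv]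
  have hnorm_le : u * ‖g‖ ≤ t - γ x := by
    nlinarith [sq_nonneg (‖g‖ - 1)]
  refine ⟨x + u • v, ?_⟩
  have hθ := hrem (x + u • v) (hnorm.trans_le hnorm_le)
  rw [hnorm, add_sub_cancel_left, map_smul, hgv, smul_eq_mul] at hθ
  have htri := Real.sqrt_sq_add_sq_le_add_abs_sub (u * ‖g‖) (γ (x + u • v) - t) (-u)
  have hpos : 0 < √(1 + ‖g‖ ^ 2) := by positivity
  have hmain : √((u * ‖g‖) ^ 2 + (-u) ^ 2) = (t - γ x) / √(1 + ‖g‖ ^ 2) := by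
    rw [show (u * ‖g‖) ^ 2 + (-u) ^ 2 = u ^ 2 * (1 + ‖g‖ ^ 2) by ring,
      Real.sqrt_mul' _ (by positivity), Real.sqrt_sq hu, eq_div_iff hpos.ne', mul_assoc,
      Real.mul_self_sqrt (by positivity), hu_mul]
  have hθ' : |γ (x + u • v) - t - -u| ≤ e * (t - γ x) := by
    calc |γ (x + u • v) - t - -u| = |γ (x + u • v) - γ x - u * ‖g‖ ^ 2| := by
          congr 1; linarith
      _ ≤ e * (t - γ x) := hθ.trans (mul_le_mul_of_nonneg_left hnorm_le he)
  rw [graphDist, hnorm]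
  linarith

theorem abs_graphDist_div_sub_le (he : 0 ≤ e) (hh : 0 < t - γ x)
    (hrem : ∀ w, ‖w - x‖ ≤ t - γ x → |γ w - γ x - g (w - x)| ≤ e * ‖w - x‖)
    {z : E} (hz : ∀ w, graphDist γ x t z ≤ graphDist γ x t w) :
    |graphDist γ x t z / (t - γ x) - 1 / √(1 + ‖g‖ ^ 2)| ≤ e := by
  have hz_near : ‖z - x‖ ≤ t - γ x :=
    calc ‖z - x‖ ≤ graphDist γ x t z := norm_sub_le_graphDist z
      _ ≤ graphDist γ x t x := hz x
      _ = t - γ x := by rw [graphDist_self, abs_of_pos hh]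
  have hlower := sub_le_graphDist he hz_near (hrem z hz_near)
  obtain ⟨w, hupper⟩ := exists_graphDist_le he hh.le hrem
  have hdiv : (t - γ x) / √(1 + ‖g‖ ^ 2) = 1 / √(1 + ‖g‖ ^ 2) * (t - γ x) := by ring
  rw [abs_sub_le_iff, sub_le_iff_le_add, sub_le_comm, div_le_iff₀ hh, le_div_iff₀ hh]
  constructor <;> linarith [hz w]

theorem HasFDerivAt.tendsto_graphDist_div (hγ : HasFDerivAt γ g x) {z : ℝ → E}
    (hz : ∀ t, γ x < t → ∀ w, graphDist γ x t (z t) ≤ graphDist γ x t w) :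
    Tendsto (fun t => graphDist γ x t (z t) / (t - γ x)) (𝓝[>] γ x)
      (𝓝 (1 / √(1 + ‖g‖ ^ 2))) := by
  rw [Metric.tendsto_nhdsWithin_nhds]
  intro ε hε
  obtain ⟨δ, hδ, hrem⟩ := Metric.eventually_nhds_iff.mp (hγ.isLittleO.def (half_pos hε))
  refine ⟨δ, hδ, fun t (ht : γ x < t) htδ => ?_⟩
  have hh : 0 < t - γ x := sub_pos.2 ht
  have hhδ : t - γ x < δ := lt_of_abs_lt (Real.dist_eq t (γ x) ▸ htδ)
  refine (abs_graphDist_div_sub_le (half_pos hε).le hh (fun w hw => ?_) (hz t ht)).trans_lt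
    (half_lt_self hε)
  simpa only [Real.norm_eq_abs] using hrem (show dist w x < δ by rw [dist_eq_norm]; linarith)

end InnerProductSpace

theorem vertical_dist_div_dist_tendsto_general
    {n : ℕ}
    (γ : EuclideanSpace ℝ (Fin n) → ℝ) (hγ : ContDiff ℝ 1 γ)
    (x' : EuclideanSpace ℝ (Fin n))
    (z : ℝ → EuclideanSpace ℝ (Fin n))
    (hz : ∀ t, γ x' < t → ∀ w' : EuclideanSpace ℝ (Fin n),
      Real.sqrt (‖z t - x'‖ ^ 2 + (γ (z t) - t) ^ 2) ≤
        Real.sqrt (‖w' - x'‖ ^ 2 + (γ w' - t) ^ 2)) :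
    Tendsto (fun t : ℝ =>
        |t - γ x'| / Real.sqrt (‖z t - x'‖ ^ 2 + (γ (z t) - t) ^ 2))
      (nhdsWithin (γ x') (Set.Ioi (γ x')))
      (nhds (Real.sqrt (1 + ‖fderiv ℝ γ x'‖ ^ 2))) := by
  have hderiv : HasFDerivAt γ (fderiv ℝ γ x') x' :=
    (hγ.differentiable one_ne_zero x').hasFDerivAt
  have hratio := (hderiv.tendsto_graphDist_div hz).inv₀ (by positivity)
  rw [one_div, inv_inv] at hratio
  refine hratio.congr' (eventually_nhdsWithin_of_forall fun t (ht : γ x' < t) => ?_)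
  change _ = |t - γ x'| / graphDist γ x' t (z t)
  rw [inv_div, abs_of_pos (sub_pos.2 ht)]

/-- The ratio of the vertical distance to the distance to the graph of a `C¹` function
converges to the surface-area element `√(1 + |∇γ(x')|²)` as the point approaches the
graph vertically from above, for any choice of distance minimizers. -/
theorem vertical_dist_div_dist_tendsto
    {n : ℕ} (hn : 1 ≤ n)
    (γ : EuclideanSpace ℝ (Fin n) → ℝ) (hγ : ContDiff ℝ 1 γ)
    (x' : EuclideanSpace ℝ (Fin n))
    (z : ℝ → EuclideanSpace ℝ (Fin n))
    (hz : ∀ t, γ x' < t → ∀ w' : EuclideanSpace ℝ (Fin n),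
      Real.sqrt (‖z t - x'‖ ^ 2 + (γ (z t) - t) ^ 2) ≤
        Real.sqrt (‖w' - x'‖ ^ 2 + (γ w' - t) ^ 2)) :
    Tendsto (fun t : ℝ =>
        |t - γ x'| / Real.sqrt (‖z t - x'‖ ^ 2 + (γ (z t) - t) ^ 2))
      (nhdsWithin (γ x') (Set.Ioi (γ x')))
      (nhds (Real.sqrt (1 + ‖fderiv ℝ γ x'‖ ^ 2))) :=
  vertical_dist_div_dist_tendsto_general γ hγ x' z hz
end
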